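/- arXiv:1010.4766 — 3 statements merged into one kernel-verified Lean document; each statement's English description precedes it below -/
import Mathlib

section
/- Let K be a number field. Inside the topological group A_{K,f}ˣ, the intersection of the integral unit subgroup Ô_Kˣ with the closure of (the diagonal image of) K*₊ equals the closure of (the diagonal image of) 𝓞*_{K,+}. -/
open scoped NumberField
open IsDedekindDomain

/-- The subgroup `K*₊ ⊆ Kˣ` of totally positive elements of a field `K`. -/
def totallyPositiveUnits (K : Type*) [Field K] : Subgroup Kˣ where
  carrier := {x | ∀ φ : K →+* ℝ, 0 < φ x}
  mul_mem' {a b} ha hb φ := by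
    rw [Units.val_mul, map_mul]; exact mul_pos (ha φ) (hb φ)
  one_mem' φ := by simp
  inv_mem' {a} ha φ := by
    rw [Units.val_inv_eq_inv_val, map_inv₀]
    exact inv_pos.mpr (ha φ)

/-- The subgroup `𝓞*_{K,+} ⊆ Kˣ` of totally positive units of the ring of integers. -/
def totallyPositiveIntegerUnits (K : Type*) [Field K] : Subgroup Kˣ where
  carrier := {x | IsIntegral ℤ (x : K) ∧ IsIntegral ℤ ((x⁻¹ : Kˣ) : K) ∧
    ∀ φ : K →+* ℝ, 0 < φ x}
  one_mem' := ⟨by simpa using isIntegral_one, by simpa using isIntegral_one,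
    fun φ => by simp⟩
  mul_mem' {a b} ha hb := by
    refine ⟨by rw [Units.val_mul]; exact ha.1.mul hb.1, ?_, fun φ => by
      rw [Units.val_mul, map_mul]; exact mul_pos (ha.2.2 φ) (hb.2.2 φ)⟩
    rw [mul_inv_rev, Units.val_mul]
    exact hb.2.1.mul ha.2.1
  inv_mem' {a} ha := ⟨ha.2.1, by simpa using ha.1, fun φ => by
    rw [Units.val_inv_eq_inv_val, map_inv₀]; exact inv_pos.mpr (ha.2.2 φ)⟩

/-- The diagonal embedding `Kˣ → A_{K,f}ˣ` on unit groups. -/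
noncomputable def unitsDiagonal (K : Type*) [Field K] [NumberField K] :
    Kˣ →* (FiniteAdeleRing (𝓞 K) K)ˣ :=
  Units.map (algebraMap K (FiniteAdeleRing (𝓞 K) K)).toMonoidHom


open IsDedekindDomain

/-- The integral unit group `Ô_Kˣ ⊆ A_{K,f}ˣ`: units `u` such that both `u` and `u⁻¹`
are integral at every finite place. -/
def integralAdeleUnits (K : Type*) [Field K] [NumberField K] :
    Set (FiniteAdeleRing (𝓞 K) K)ˣ :=
  {u | (∀ v : HeightOneSpectrum (𝓞 K),
          (u : FiniteAdeleRing (𝓞 K) K) v ∈ v.adicCompletionIntegers K) ∧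
       (∀ v : HeightOneSpectrum (𝓞 K),
          ((u⁻¹ : (FiniteAdeleRing (𝓞 K) K)ˣ) : FiniteAdeleRing (𝓞 K) K) v ∈
            v.adicCompletionIntegers K)}

/-!
The integral adeles form an open, hence also closed, additive subgroup of `A_{K,f}`, so `Ô_Kˣ` is
clopen in `A_{K,f}ˣ`, and for a clopen `U` one has `U ∩ closure S = closure (U ∩ S)`. A principal
unit `x` lies in `Ô_Kˣ` exactly when `x` and `x⁻¹` have valuation `≤ 1` at every finite place,
i.e. when `x ∈ 𝓞_Kˣ`; so `Ô_Kˣ` meets the image of `K*₊` in the image of `𝓞*_{K,+}`.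
-/

theorem IsClopen.inter_closure_eq {X : Type*} [TopologicalSpace X] {s : Set X} (hs : IsClopen s)
    (t : Set X) : s ∩ closure t = closure (s ∩ t) :=
  hs.isOpen.inter_closure.antisymm <|
    (closure_inter_subset_inter_closure s t).trans_eq <| by rw [hs.isClosed.closure_eq]

namespace IsDedekindDomain.FiniteAdeleRing

open HeightOneSpectrum

variable (R : Type*) [CommRing R] [IsDedekindDomain R] (K : Type*) [Field K] [Algebra R K]
  [IsFractionRing R K]

def integralAdeles : Subring (FiniteAdeleRing R K) where
  carrier := {x | ∀ v : HeightOneSpectrum R, x v ∈ v.adicCompletionIntegers K}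
  mul_mem' ha hb v := mul_mem (ha v) (hb v)
  one_mem' _ := one_mem _
  add_mem' ha hb v := add_mem (ha v) (hb v)
  zero_mem' _ := zero_mem _
  neg_mem' ha v := neg_mem (ha v)

theorem isClopen_integralAdeles : IsClopen (integralAdeles R K : Set (FiniteAdeleRing R K)) :=
  have isOpen : IsOpen (integralAdeles R K : Set (FiniteAdeleRing R K)) :=
    RestrictedProduct.isOpen_forall_mem fun _ => Valued.isOpen_valuationSubring _
  ⟨AddSubgroup.isClosed_of_isOpen (integralAdeles R K).toAddSubgroup isOpen, isOpen⟩

variable {R K}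

theorem algebraMap_mem_integralAdeles_iff (x : K) :
    algebraMap K (FiniteAdeleRing R K) x ∈ integralAdeles R K ↔ x ∈ (algebraMap R K).range := by
  refine (forall_congr' fun v => ?_).trans
    ⟨mem_integers_of_valuation_le_one K x, by rintro ⟨r, rfl⟩ v; exact v.valuation_le_one r⟩
  rw [algebraMap_apply, mem_adicCompletionIntegers, valuedAdicCompletion_eq_valuation']

end IsDedekindDomain.FiniteAdeleRing

section NumberField

open FiniteAdeleRing

variable {K : Type*} [Field K] [NumberField K]

theorem isClopen_integralAdeleUnits : IsClopen (integralAdeleUnits K) :=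
  ((isClopen_integralAdeles (𝓞 K) K).preimage Units.continuous_val).inter
    ((isClopen_integralAdeles (𝓞 K) K).preimage Units.continuous_coe_inv)

theorem unitsDiagonal_mem_integralAdeleUnits_iff (x : Kˣ) :
    unitsDiagonal K x ∈ integralAdeleUnits K ↔
      IsIntegral ℤ (x : K) ∧ IsIntegral ℤ ((x⁻¹ : Kˣ) : K) := by
  simp only [IsIntegralClosure.isIntegral_iff (A := 𝓞 K), ← RingHom.mem_range,
    ← algebraMap_mem_integralAdeles_iff]
  exact Iff.rfl

theorem coe_totallyPositiveIntegerUnits :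
    (totallyPositiveIntegerUnits K : Set Kˣ) =
      (totallyPositiveUnits K : Set Kˣ) ∩ unitsDiagonal K ⁻¹' integralAdeleUnits K := by
  ext x
  rw [Set.mem_inter_iff, Set.mem_preimage, unitsDiagonal_mem_integralAdeleUnits_iff]
  exact ⟨fun ⟨hx, hx', hpos⟩ => ⟨hpos, hx, hx'⟩, fun ⟨hpos, hx, hx'⟩ => ⟨hx, hx', hpos⟩⟩

end NumberField

/-- Inside `A_{K,f}ˣ`, the intersection of `Ô_Kˣ` with the closure of
the diagonal image of `K*₊` equals the closure of the diagonal image of `𝓞*_{K,+}`. -/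
theorem integralUnits_inter_closure_totallyPositive (K : Type*) [Field K] [NumberField K] :
    integralAdeleUnits K ∩
        closure (unitsDiagonal K '' (totallyPositiveUnits K : Set Kˣ)) =
      closure (unitsDiagonal K '' (totallyPositiveIntegerUnits K : Set Kˣ)) := by
  rw [isClopen_integralAdeleUnits.inter_closure_eq, Set.inter_comm, ← Set.image_inter_preimage,
    coe_totallyPositiveIntegerUnits]
end

section
/- Let n ≥ 1 and let x₁, …, x_n > 1 and s₁, …, s_n ≥ 1 be real numbers. Then the function β ↦ (1 − ∏_{i=1}^{n} x_i^{−s_iβ}) / ∏_{i=1}^{n} (1 − x_i^{−β}) is non-increasing on the interval (0, 1]. -/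
/-!
Fix `0 < β₁ ≤ β₂` and put `c = β₂ / β₁ ≥ 1`, `aᵢ = xᵢ ^ (-β₁)` and `p = ∏ xᵢ ^ (-sᵢβ₁)`, so that the
value at `β₂` is `(1 - p ^ c) / ∏ (1 - aᵢ ^ c)`. The secant slope `g(t) = (1 - t ^ c) / (1 - t)` of
the convex function `t ^ c` through `1` is monotone on `[0, 1)` with `g(0) = 1`, and `p ≤ aⱼ`
for every `j` since `sⱼ ≥ 1`; hence `g(p) ≤ g(aⱼ) ≤ ∏ g(aᵢ)`, which is the claim after clearing
denominators.
-/

open Finset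

theorem monotoneOn_one_sub_rpow_div_one_sub {c : ℝ} (hc : 1 ≤ c) :
    MonotoneOn (fun t : ℝ => (1 - t ^ c) / (1 - t)) (Set.Ico 0 1) := by
  have hslope := ((convexOn_rpow hc).slope_mono (Set.mem_Ici.2 zero_le_one)).mono
    fun t (ht : t ∈ Set.Ico 0 1) => ⟨Set.mem_Ici.2 ht.1, ht.2.ne⟩
  refine hslope.congr fun t _ => ?_
  rw [slope_def_field, Real.one_rpow, ← neg_div_neg_eq, neg_sub, neg_sub]

theorem one_le_one_sub_rpow_div_one_sub {c t : ℝ} (hc : 1 ≤ c) (ht₀ : 0 ≤ t) (ht₁ : t < 1) :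
    1 ≤ (1 - t ^ c) / (1 - t) := by
  simpa [Real.zero_rpow (zero_lt_one.trans_le hc).ne'] using
    monotoneOn_one_sub_rpow_div_one_sub hc ⟨le_rfl, zero_lt_one⟩ ⟨ht₀, ht₁⟩ ht₀

theorem one_sub_rpow_div_prod_le {ι : Type*} [Fintype ι] {a : ι → ℝ} {p c : ℝ} (hc : 1 ≤ c)
    (ha₀ : ∀ i, 0 ≤ a i) (ha₁ : ∀ i, a i < 1) {j : ι} (hp₀ : 0 ≤ p) (hpj : p ≤ a j) :
    (1 - p ^ c) / ∏ i, (1 - a i ^ c) ≤ (1 - p) / ∏ i, (1 - a i) := by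
  have hg : ∀ i, 1 ≤ (1 - a i ^ c) / (1 - a i) := fun i =>
    one_le_one_sub_rpow_div_one_sub hc (ha₀ i) (ha₁ i)
  have key : (1 - p ^ c) / (1 - p) ≤ ∏ i, (1 - a i ^ c) / (1 - a i) :=
    calc (1 - p ^ c) / (1 - p) ≤ (1 - a j ^ c) / (1 - a j) :=
          monotoneOn_one_sub_rpow_div_one_sub hc ⟨hp₀, hpj.trans_lt (ha₁ j)⟩ ⟨ha₀ j, ha₁ j⟩ hpj
      _ = ∏ i ∈ {j}, (1 - a i ^ c) / (1 - a i) := by rw [prod_singleton]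
      _ ≤ ∏ i, (1 - a i ^ c) / (1 - a i) :=
          prod_le_prod_of_subset_of_one_le (subset_univ _)
            (fun i _ => zero_le_one.trans (hg i)) fun i _ _ => hg i
  have hD₁ : 0 < ∏ i, (1 - a i) := prod_pos fun i _ => sub_pos.2 (ha₁ i)
  have hD_c : 0 < ∏ i, (1 - a i ^ c) :=
    prod_pos fun i _ => sub_pos.2 (Real.rpow_lt_one (ha₀ i) (ha₁ i) (zero_lt_one.trans_le hc))
  rw [prod_div_distrib, div_le_div_iff₀ (sub_pos.2 (hpj.trans_lt (ha₁ j))) hD₁] at key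
  rw [div_le_div_iff₀ hD_c hD₁]
  linarith

/-- For `n ≥ 1`, reals `x i > 1` and `s i ≥ 1`, the function
`β ↦ (1 - ∏ i, x i ^ (-s i β)) / ∏ i, (1 - x i ^ (-β))` is non-increasing on `(0, 1]`. -/
theorem antitoneOn_product_ratio (n : ℕ) (hn : 1 ≤ n) (x s : Fin n → ℝ)
    (hx : ∀ i, 1 < x i) (hs : ∀ i, 1 ≤ s i) :
    AntitoneOn
      (fun β : ℝ => (1 - ∏ i, x i ^ (-(s i * β))) / ∏ i, (1 - x i ^ (-β)))
      (Set.Ioc (0 : ℝ) 1) := by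
  rintro β₁ ⟨hβ₁, -⟩ β₂ - hβ
  set c := β₂ / β₁
  have hc : 1 ≤ c := (one_le_div hβ₁).2 hβ
  have hx₀ : ∀ i, 0 ≤ x i := fun i => zero_le_one.trans (hx i).le
  have hu₀ : ∀ i, 0 ≤ x i ^ (-(s i * β₁)) := fun i => Real.rpow_nonneg (hx₀ i) _
  have hu_le : ∀ i, x i ^ (-(s i * β₁)) ≤ x i ^ (-β₁) := fun i =>
    Real.rpow_le_rpow_of_exponent_le (hx i).le (by nlinarith [hs i])
  have ha₁ : ∀ i, x i ^ (-β₁) < 1 := fun i =>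
    Real.rpow_lt_one_of_one_lt_of_neg (hx i) (neg_neg_of_pos hβ₁)
  have hpow : ∀ i (t : ℝ), x i ^ (-(t * β₂)) = (x i ^ (-(t * β₁))) ^ c := fun i t => by
    rw [← Real.rpow_mul (hx₀ i)]; congr 1; simp only [c]; field_simp
  let j : Fin n := ⟨0, hn⟩
  have hprod : ∏ i, x i ^ (-(s i * β₁)) ≤ x j ^ (-β₁) :=
    calc ∏ i, x i ^ (-(s i * β₁)) ≤ ∏ i ∈ {j}, x i ^ (-(s i * β₁)) :=
          prod_le_prod_of_subset_of_le_one (subset_univ _) (fun i _ => hu₀ i)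
            fun i _ _ => (hu_le i).trans (ha₁ i).le
      _ ≤ x j ^ (-β₁) := by rw [prod_singleton]; exact hu_le j
  have hnum : ∏ i, x i ^ (-(s i * β₂)) = (∏ i, x i ^ (-(s i * β₁))) ^ c := by
    rw [← Real.finsetProd_rpow _ _ fun i _ => hu₀ i]; simp only [hpow]
  have hden : ∀ i, x i ^ (-β₂) = (x i ^ (-β₁)) ^ c := fun i => by simpa using hpow i 1
  simp only [hnum, hden]
  exact one_sub_rpow_div_prod_le hc (fun i => Real.rpow_nonneg (hx₀ i) _) ha₁
    (prod_nonneg fun i _ => hu₀ i) hprod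
end

section
/- Let L/K be an extension of number fields with n = [L:K], and let 𝔭 be a nonzero prime ideal of 𝓞_K. Then the function β ↦ (1 − N_K(𝔭)^{−nβ}) / ∏_{𝔮 | 𝔭𝓞_L} (1 − N_L(𝔮)^{−β}), where the product is over the nonzero prime ideals 𝔮 of 𝓞_L dividing 𝔭𝓞_L, is non-increasing on the interval (0, 1]. -/
open scoped NumberField

/-!
Choose a prime `q₀` above `p`. Since `N(q₀)` divides `N(p𝓞_L) = N(p)^n`, the function is
`(1 - c^{-β}) / (1 - N(q₀)^{-β})` with `N(q₀) ≤ c = N(p)^n`, times the decreasing positive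
factors `(1 - N(q)^{-β})⁻¹` for the other `q`. Writing `u = N(q₀)^{-β}`, which decreases with
`β`, the first factor is `(1 - u^r) / (1 - u)` with `r ≥ 1`: the slope of the chord of the
convex function `u ↦ u^r` from `u` to `1`, which increases with `u`.
-/

open Real Set

theorem monotoneOn_one_sub_rpow_div_one_sub_s17 {r : ℝ} (hr : 1 ≤ r) :
    MonotoneOn (fun u : ℝ => (1 - u ^ r) / (1 - u)) (Ico 0 1) := by
  intro x hx y hy hxy
  have hslope := (convexOn_rpow hr).secant_mono (a := 1) (by simp) hx.1 hy.1 hx.2.ne hy.2.ne hxy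
  rwa [one_rpow, ← neg_div_neg_eq, neg_sub, neg_sub, ← neg_div_neg_eq (y ^ r - 1), neg_sub,
    neg_sub] at hslope

theorem rpow_neg_mem_Ioo {b β : ℝ} (hb : 1 < b) (hβ : 0 < β) : b ^ (-β) ∈ Ioo 0 1 :=
  ⟨rpow_pos_of_pos (zero_lt_one.trans hb) _,
    rpow_lt_one_of_one_lt_of_neg hb (neg_neg_of_pos hβ)⟩

theorem antitoneOn_one_sub_rpow_neg_div {b c : ℝ} (hb : 1 < b) (hbc : b ≤ c) :
    AntitoneOn (fun β : ℝ => (1 - c ^ (-β)) / (1 - b ^ (-β))) (Ioi 0) := by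
  have hlogb : 0 < log b := log_pos hb
  have hr : 1 ≤ log c / log b := (one_le_div hlogb).2 (log_le_log (by linarith) hbc)
  have hc : ∀ β : ℝ, c ^ (-β) = (b ^ (-β)) ^ (log c / log b) := fun β => by
    rw [← rpow_mul (by linarith), rpow_def_of_pos (by linarith), rpow_def_of_pos (by linarith)]
    field_simp
  intro x hx y hy hxy
  simp only [hc]
  exact monotoneOn_one_sub_rpow_div_one_sub_s17 hr (Ioo_subset_Ico_self (rpow_neg_mem_Ioo hb hy))
    (Ioo_subset_Ico_self (rpow_neg_mem_Ioo hb hx))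
    (rpow_le_rpow_of_exponent_le hb.le (neg_le_neg hxy))

theorem antitoneOn_one_sub_rpow_neg_div_prod {ι : Type*} {T : Finset ι} {b : ι → ℝ} {c : ℝ}
    {i₀ : ι} (hi₀ : i₀ ∈ T) (hb : ∀ i ∈ T, 1 < b i) (hc : b i₀ ≤ c) :
    AntitoneOn (fun β : ℝ => (1 - c ^ (-β)) / ∏ i ∈ T, (1 - b i ^ (-β))) (Ioi 0) := by
  classical
  have hpos : ∀ i ∈ T, ∀ β ∈ Ioi (0 : ℝ), 0 < 1 - b i ^ (-β) := fun i hi β hβ =>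
    sub_pos.2 (rpow_neg_mem_Ioo (hb i hi) hβ).2
  have hsplit : ∀ β : ℝ, (1 - c ^ (-β)) / ∏ i ∈ T, (1 - b i ^ (-β)) =
      (1 - c ^ (-β)) / (1 - b i₀ ^ (-β)) * ∏ i ∈ T.erase i₀, (1 - b i ^ (-β))⁻¹ := by
    intro β
    rw [← Finset.mul_prod_erase _ _ hi₀, Finset.prod_inv_distrib, div_mul_eq_div_div,
      div_eq_mul_inv]
  intro x hx y hy hxy
  simp only [hsplit]
  refine mul_le_mul (antitoneOn_one_sub_rpow_neg_div (hb i₀ hi₀) hc hx hy hxy) ?_ ?_ ?_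
  · refine Finset.prod_le_prod
      (fun i hi => (inv_pos.2 (hpos i (Finset.mem_of_mem_erase hi) y hy)).le)
      fun i hi => inv_anti₀ (hpos i (Finset.mem_of_mem_erase hi) x hx) ?_
    exact sub_le_sub_left (rpow_le_rpow_of_exponent_le (hb i (Finset.mem_of_mem_erase hi)).le
      (neg_le_neg hxy)) 1
  · exact Finset.prod_nonneg fun i hi =>
      (inv_pos.2 (hpos i (Finset.mem_of_mem_erase hi) y hy)).le
  · exact div_nonneg (sub_nonneg.2 (rpow_neg_mem_Ioo ((hb i₀ hi₀).trans_le hc) hx).2.le)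
      (hpos i₀ hi₀ x hx).le

open UniqueFactorizationMonoid in
theorem Ideal.mem_normalizedFactors_iff_isPrime_ne_bot_dvd {S : Type*} [CommRing S]
    [IsDedekindDomain S] {I q : Ideal S} (hI : I ≠ ⊥) :
    q ∈ normalizedFactors I ↔ q.IsPrime ∧ q ≠ ⊥ ∧ q ∣ I := by
  rw [Ideal.mem_normalizedFactors_iff hI, Ideal.dvd_iff_le]
  exact ⟨fun ⟨hq, hIq⟩ => ⟨hq, fun h => hI (le_bot_iff.1 (h ▸ hIq)), hIq⟩,
    fun ⟨hq, _, hIq⟩ => ⟨hq, hIq⟩⟩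

theorem NumberField.absNorm_map_algebraMap (K L : Type*) [Field K] [NumberField K]
    [Field L] [NumberField L] [Algebra K L] (p : Ideal (𝓞 K)) :
    Ideal.absNorm (p.map (algebraMap (𝓞 K) (𝓞 L))) =
      Ideal.absNorm p ^ Module.finrank K L := by
  rw [Ideal.absNorm_algebraMap, IsFractionRing.finrank_eq (𝓞 K) K (𝓞 L) L]

open UniqueFactorizationMonoid in
/-- For an extension `L/K` of number fields of degree `n` and a
nonzero prime `𝔭` of `𝓞_K`, the function
`β ↦ (1 - N_K(𝔭)^{-nβ}) / ∏_{𝔮 ∣ 𝔭𝓞_L} (1 - N_L(𝔮)^{-β})` is non-increasing on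
`(0, 1]`. -/
theorem antitoneOn_prime_factor_ratio (K L : Type*) [Field K] [NumberField K]
    [Field L] [NumberField L] [Algebra K L]
    (p : Ideal (𝓞 K)) (hp : p.IsPrime) (hp0 : p ≠ ⊥) :
    AntitoneOn
      (fun β : ℝ =>
        (1 - (Ideal.absNorm p : ℝ) ^ (-((Module.finrank K L : ℝ) * β))) /
          ∏ᶠ (q : Ideal (𝓞 L)) (_ : q.IsPrime ∧ q ≠ ⊥ ∧
              q ∣ Ideal.map (algebraMap (𝓞 K) (𝓞 L)) p),
            (1 - (Ideal.absNorm q : ℝ) ^ (-β)))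
      (Set.Ioc (0 : ℝ) 1) := by
  classical
  set I := p.map (algebraMap (𝓞 K) (𝓞 L))
  have hnorm : Ideal.absNorm I = Ideal.absNorm p ^ Module.finrank K L :=
    NumberField.absNorm_map_algebraMap K L p
  have hI1 : 1 < Ideal.absNorm I := hnorm ▸ Nat.one_lt_pow Module.finrank_pos.ne'
    (NumberField.HeightOneSpectrum.one_lt_absNorm ⟨p, hp, hp0⟩)
  have hI0 : I ≠ ⊥ := fun h => by simp [h] at hI1
  set T := (normalizedFactors I).toFinset
  have hT : ∀ q, q ∈ T ↔ q.IsPrime ∧ q ≠ ⊥ ∧ q ∣ I := fun q => by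
    rw [Multiset.mem_toFinset, Ideal.mem_normalizedFactors_iff_isPrime_ne_bot_dvd hI0]
  have hI_ne_top : ¬IsUnit I := by
    rw [Ideal.isUnit_iff, ← Ideal.absNorm_eq_one_iff]
    exact hI1.ne'
  obtain ⟨q₀, hq₀⟩ := exists_mem_normalizedFactors hI0 hI_ne_top
  replace hq₀ : q₀ ∈ T := Multiset.mem_toFinset.2 hq₀
  have hq1 : ∀ q ∈ T, 1 < (Ideal.absNorm q : ℝ) := fun q hq => by
    obtain ⟨hq, hq0, -⟩ := (hT q).1 hq
    exact_mod_cast NumberField.HeightOneSpectrum.one_lt_absNorm ⟨q, hq, hq0⟩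
  have hq₀I : Ideal.absNorm q₀ ≤ Ideal.absNorm I :=
    Nat.le_of_dvd (by omega)
      (Ideal.absNorm_dvd_absNorm_of_le (Ideal.le_of_dvd ((hT q₀).1 hq₀).2.2))
  have hnum : ∀ β : ℝ, (Ideal.absNorm p : ℝ) ^ (-((Module.finrank K L : ℝ) * β)) =
      (Ideal.absNorm I : ℝ) ^ (-β) := fun β => by
    rw [hnorm, Nat.cast_pow, ← rpow_natCast_mul (Nat.cast_nonneg _), mul_neg]
  simp only [hnum, finprod_cond_eq_prod_of_cond_iff _ fun {q} _ => (hT q).symm]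
  exact (antitoneOn_one_sub_rpow_neg_div_prod hq₀ hq1 (by exact_mod_cast hq₀I)).mono
    Ioc_subset_Ioi_self
end
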